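/- arXiv:2412.00241 — 5 statements merged into one kernel-verified Lean document; each statement's English description precedes it below -/
import Mathlib

section
/- Permutation equivariance of the bi-directional MEGA-GNN layer: for every permutation σ of V, the bi-directional node update satisfies biLayer(σ•E, σ•x)(j) = biLayer(E, x)(σ⁻¹ j) for all j ∈ V, and the reverse-edge update satisfies revUpdate(σ•E, σ•x)(i)(j) = revUpdate(E, x)(σ⁻¹ i)(σ⁻¹ j) for all i, j ∈ V. -/
open scoped Classical

/-- The bi-directional MEGA-GNN node update:
`biLayer(E, x)(j) = g (x j) (nodeAgg M_j) (nodeAgg' M̂_j)`, where `M_j` is the multiset of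
`f (x i) (edgeAgg (E i j))` over all `i` with `E i j ≠ 0` (in-neighbors) and `M̂_j` is the
multiset of `f' (x i) (edgeAgg' (E j i))` over all `i` with `E j i ≠ 0` (out-neighbors). -/
noncomputable def megaBiLayer {V : Type*} [Fintype V] {d n k p q n' : ℕ}
    (edgeAgg edgeAgg' : Multiset (Fin d → ℝ) → (Fin k → ℝ))
    (f f' : (Fin n → ℝ) → (Fin k → ℝ) → (Fin p → ℝ))
    (nodeAgg nodeAgg' : Multiset (Fin p → ℝ) → (Fin q → ℝ))
    (g : (Fin n → ℝ) → (Fin q → ℝ) → (Fin q → ℝ) → (Fin n' → ℝ))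
    (E : V → V → Multiset (Fin d → ℝ)) (x : V → (Fin n → ℝ)) (j : V) : Fin n' → ℝ :=
  g (x j)
    (nodeAgg
      (Multiset.map (fun i => f (x i) (edgeAgg (E i j)))
        (Finset.univ.filter (fun i => E i j ≠ 0)).val))
    (nodeAgg'
      (Multiset.map (fun i => f' (x i) (edgeAgg' (E j i)))
        (Finset.univ.filter (fun i => E j i ≠ 0)).val))

/-- The reverse-edge update:
`revUpdate(E, x)(i)(j) = Multiset.map (fun e => ĝ_e (x i) e (edgeAgg' (E j i))) (E j i)`. -/
def megaRevUpdate {V : Type*} {d n k d' : ℕ}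
    (edgeAgg' : Multiset (Fin d → ℝ) → (Fin k → ℝ))
    (ghatₑ : (Fin n → ℝ) → (Fin d → ℝ) → (Fin k → ℝ) → (Fin d' → ℝ))
    (E : V → V → Multiset (Fin d → ℝ)) (x : V → (Fin n → ℝ))
    (i j : V) : Multiset (Fin d' → ℝ) :=
  Multiset.map (fun e => ghatₑ (x i) e (edgeAgg' (E j i))) (E j i)

/-- **Permutation equivariance of the bi-directional MEGA-GNN layer**: for every
permutation `σ` of `V`, `biLayer(σ•E, σ•x)(j) = biLayer(E, x)(σ⁻¹ j)` for all `j`, and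
`revUpdate(σ•E, σ•x)(i)(j) = revUpdate(E, x)(σ⁻¹ i)(σ⁻¹ j)` for all `i, j`. -/
theorem megaBi_equivariant {V : Type*} [Fintype V] {d n k p q n' d' : ℕ}
    (edgeAgg edgeAgg' : Multiset (Fin d → ℝ) → (Fin k → ℝ))
    (f f' : (Fin n → ℝ) → (Fin k → ℝ) → (Fin p → ℝ))
    (nodeAgg nodeAgg' : Multiset (Fin p → ℝ) → (Fin q → ℝ))
    (g : (Fin n → ℝ) → (Fin q → ℝ) → (Fin q → ℝ) → (Fin n' → ℝ))
    (ghatₑ : (Fin n → ℝ) → (Fin d → ℝ) → (Fin k → ℝ) → (Fin d' → ℝ))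
    (σ : Equiv.Perm V)
    (E : V → V → Multiset (Fin d → ℝ)) (x : V → (Fin n → ℝ)) :
    (∀ j : V,
      megaBiLayer edgeAgg edgeAgg' f f' nodeAgg nodeAgg' g
        (fun i' j' => E (σ⁻¹ i') (σ⁻¹ j')) (fun i' => x (σ⁻¹ i')) j =
      megaBiLayer edgeAgg edgeAgg' f f' nodeAgg nodeAgg' g E x (σ⁻¹ j)) ∧
    (∀ i j : V,
      megaRevUpdate edgeAgg' ghatₑ
        (fun i' j' => E (σ⁻¹ i') (σ⁻¹ j')) (fun i' => x (σ⁻¹ i')) i j =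
      megaRevUpdate edgeAgg' ghatₑ E x (σ⁻¹ i) (σ⁻¹ j)) := by
  have main : ∀ {α : Type} (F : V → α) (P : V → Prop) (hP : DecidablePred P)
      (hQ : DecidablePred (fun i => P (σ⁻¹ i))),
      Multiset.map (fun i => F (σ⁻¹ i)) (@Finset.filter V (fun i => P (σ⁻¹ i)) hQ Finset.univ).val =
        Multiset.map F (@Finset.filter V P hP Finset.univ).val := by
    intro α F P hP hQ
    have h1 : (@Finset.filter V (fun i => P (σ⁻¹ i)) hQ Finset.univ) =
        Finset.map σ.toEmbedding (@Finset.filter V P hP Finset.univ) := by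
      ext a
      simp only [Finset.mem_filter, Finset.mem_map, Finset.mem_univ, true_and,
        Equiv.coe_toEmbedding]
      constructor
      · intro h; exact ⟨σ⁻¹ a, h, by simp⟩
      · rintro ⟨b, hb, rfl⟩; simpa using hb
    rw [h1, Finset.map_val, Multiset.map_map]
    refine Multiset.map_congr rfl ?_
    intro a _
    simp
  constructor
  · intro j
    unfold megaBiLayer
    beta_reduce
    have e1 := main (fun i => f (x i) (edgeAgg (E i (σ⁻¹ j))))
      (fun i => E i (σ⁻¹ j) ≠ 0) (fun _ => instDecidableNot) (fun _ => instDecidableNot)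
    have e2 := main (fun i => f' (x i) (edgeAgg' (E (σ⁻¹ j) i)))
      (fun i => E (σ⁻¹ j) i ≠ 0) (fun _ => instDecidableNot) (fun _ => instDecidableNot)
    exact congrArg₂ (g (x (σ⁻¹ j))) (congrArg nodeAgg e1) (congrArg nodeAgg' e2)
  · intro i j
    rfl
end

section
/- Unique node IDs from a strict total edge ordering (Lemma 1, combinatorial core): with the BFS node-ID assignment h defined from the injective edge labeling L on a connected directed multigraph with root r, the map h : V → List ℕ is injective; i.e., every node of the connected multigraph receives a unique ID. -/
open scoped Classical

/-- The simple graph underlying a directed multigraph with edge sources `src` and targets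
`tgt`: `u ~ v` iff `u ≠ v` and there is an edge `e` with (`src e = u` and `tgt e = v`) or
(`src e = v` and `tgt e = u`). -/
def mgGraph {V : Type*} {Ed : Type*} (src tgt : Ed → V) : SimpleGraph V where
  Adj u v := u ≠ v ∧ ∃ e : Ed, (src e = u ∧ tgt e = v) ∨ (src e = v ∧ tgt e = u)
  symm := by
    refine ⟨?_⟩
    rintro u v ⟨hne, e, he⟩
    exact ⟨hne.symm, e, he.symm⟩
  loopless := by
    refine ⟨?_⟩
    rintro v ⟨hne, -⟩
    exact hne rfl

/-- The code `c(u, v)`: the minimum of the set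
`{L e : src e = u, tgt e = v} ∪ {m + L e : src e = v, tgt e = u}`
(which is nonempty and finite whenever `u ~ v`). -/
noncomputable def mgCode {V : Type*} {Ed : Type*} (src tgt : Ed → V) (L : Ed → ℕ) (m : ℕ)
    (u v : V) : ℕ :=
  sInf ({x | ∃ e : Ed, src e = u ∧ tgt e = v ∧ L e = x} ∪
        {x | ∃ e : Ed, src e = v ∧ tgt e = u ∧ m + L e = x})

/-- Auxiliary BFS assignment, recursing on a distance bound `k`: at level `k + 1`, a
non-root vertex `v` receives the lexicographically least list `h(u) ++ [c(u, v)]` over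
the neighbors `u ~ v` with `d(u) = d(v) − 1`. -/
noncomputable def bfsAux {V : Type*} [Fintype V] {Ed : Type*} [Fintype Ed]
    (src tgt : Ed → V) (L : Ed → ℕ) (m : ℕ) (r : V) : ℕ → V → List ℕ
  | 0, _ => [1]
  | k + 1, v =>
    if v = r then [1]
    else
      WithTop.untopD [] ((Finset.univ.filter (fun u : V => (mgGraph src tgt).Adj u v ∧
            (mgGraph src tgt).dist r u = (mgGraph src tgt).dist r v - 1)).image
          (fun u => bfsAux src tgt L m r k u ++ [mgCode src tgt L m u v])).min

/-- The BFS node-ID assignment `h : V → List ℕ`, defined by strong induction on the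
distance `d(v) = dist_G(r, v)` from the root: `h(r) = [1]`, and for `v ≠ r`, `h(v)` is the
lexicographically least list in `{ h(u) ++ [c(u, v)] : u ~ v and d(u) = d(v) − 1 }`. -/
noncomputable def bfsNodeID {V : Type*} [Fintype V] {Ed : Type*} [Fintype Ed]
    (src tgt : Ed → V) (L : Ed → ℕ) (m : ℕ) (r : V) (v : V) : List ℕ :=
  bfsAux src tgt L m r ((mgGraph src tgt).dist r v) v

/-!
An ID `h(v)` is the ID of a BFS parent of `v` followed by one code, so its length is
`d(v) + 1`; hence equal IDs sit at equal depth, and by induction on the depth their parents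
coincide. For fixed `u`, the code `c(u, v)` determines the neighbour `v`: codes of out-edges
lie in `1, …, m` and those of in-edges in `m + 1, …, 2m`, and `L` is injective, so the code
determines the edge realising it together with its direction.
-/

open SimpleGraph

theorem SimpleGraph.Reachable.exists_adj_dist_eq_sub_one {V : Type*} {G : SimpleGraph V}
    {r v : V} (hr : G.Reachable r v) (hv : v ≠ r) :
    ∃ u, G.Adj u v ∧ G.dist r u = G.dist r v - 1 := by
  obtain ⟨p, hp⟩ := hr.exists_walk_length_eq_dist
  have hpos : 0 < G.dist r v := hr.pos_dist_of_ne hv.symm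
  have hnil : ¬p.Nil := by rw [← Walk.length_eq_zero_iff]; omega
  refine ⟨p.penultimate, p.adj_penultimate hnil, ?_⟩
  have hle : G.dist r p.penultimate ≤ G.dist r v - 1 := by
    simpa [Walk.length_dropLast, hp] using G.dist_le p.dropLast
  rcases (p.adj_penultimate hnil).diff_dist_adj (u := r) with h | h | h <;> omega

section Code

variable {V Ed : Type*} (src tgt : Ed → V) (L : Ed → ℕ) (m : ℕ)

lemma mgCode_mem {u v : V} (h : (mgGraph src tgt).Adj u v) :
    mgCode src tgt L m u v ∈
      ({x | ∃ e, src e = u ∧ tgt e = v ∧ L e = x} ∪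
        {x | ∃ e, src e = v ∧ tgt e = u ∧ m + L e = x}) := by
  apply Nat.sInf_mem
  obtain ⟨-, e, ⟨he₁, he₂⟩ | ⟨he₁, he₂⟩⟩ := h
  · exact ⟨L e, Or.inl ⟨e, he₁, he₂, rfl⟩⟩
  · exact ⟨m + L e, Or.inr ⟨e, he₁, he₂, rfl⟩⟩

variable {src tgt L m}

lemma eq_of_mgCode_eq (hinj : Function.Injective L)
    (hL : Set.MapsTo L Set.univ (Set.Icc 1 m)) {u v w : V}
    (hv : (mgGraph src tgt).Adj u v) (hw : (mgGraph src tgt).Adj u w)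
    (hcode : mgCode src tgt L m u v = mgCode src tgt L m u w) : v = w := by
  have hv' := mgCode_mem src tgt L m hv
  have hw' := mgCode_mem src tgt L m hw
  rw [hcode] at hv'
  rcases hv' with ⟨e, -, he, hev⟩ | ⟨e, he, -, hev⟩ <;>
    rcases hw' with ⟨f, -, hf, hfw⟩ | ⟨f, hf, -, hfw⟩
  · rw [← he, ← hf, hinj (hev.trans hfw.symm)]
  · have := (hL (Set.mem_univ e)).2; have := (hL (Set.mem_univ f)).1; omega
  · have := (hL (Set.mem_univ e)).1; have := (hL (Set.mem_univ f)).2; omega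
  · rw [← he, ← hf, hinj (by omega : L e = L f)]

end Code

section BFS

variable {V Ed : Type*} [Fintype V] [Fintype Ed] {src tgt : Ed → V} {L : Ed → ℕ} {m : ℕ}
  {r : V}

lemma bfsNodeID_root : bfsNodeID src tgt L m r r = [1] := by
  simp [bfsNodeID, bfsAux]

lemma bfsNodeID_eq_bfsAux {k : ℕ} {v : V} (hk : (mgGraph src tgt).dist r v = k) :
    bfsNodeID src tgt L m r v = bfsAux src tgt L m r k v := by
  rw [bfsNodeID, hk]

lemma exists_bfsNodeID_eq_append {v : V} (hr : (mgGraph src tgt).Reachable r v) (hv : v ≠ r) :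
    ∃ u, (mgGraph src tgt).Adj u v ∧
      (mgGraph src tgt).dist r u = (mgGraph src tgt).dist r v - 1 ∧
      bfsNodeID src tgt L m r v = bfsNodeID src tgt L m r u ++ [mgCode src tgt L m u v] := by
  obtain ⟨k, hk⟩ := Nat.exists_eq_succ_of_ne_zero (hr.pos_dist_of_ne hv.symm).ne'
  set s := Finset.univ.filter fun u => (mgGraph src tgt).Adj u v ∧
    (mgGraph src tgt).dist r u = (mgGraph src tgt).dist r v - 1
  set t := s.image fun u => bfsAux src tgt L m r k u ++ [mgCode src tgt L m u v]
  have ht : t.Nonempty := by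
    obtain ⟨u, hu⟩ := hr.exists_adj_dist_eq_sub_one hv
    exact ⟨_, Finset.mem_image_of_mem _ (Finset.mem_filter.mpr ⟨Finset.mem_univ u, hu⟩)⟩
  obtain ⟨u, hus, hu⟩ := Finset.mem_image.mp (t.min'_mem ht)
  obtain ⟨huv, hdu⟩ := (Finset.mem_filter.mp hus).2
  refine ⟨u, huv, hdu, ?_⟩
  rw [bfsNodeID_eq_bfsAux (v := u) (k := k) (by omega), bfsNodeID_eq_bfsAux hk]
  rw [bfsAux, if_neg hv, ← Finset.coe_min' ht, WithTop.untopD_coe, hu]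

lemma length_bfsNodeID (hconn : (mgGraph src tgt).Connected) (v : V) :
    (bfsNodeID src tgt L m r v).length = (mgGraph src tgt).dist r v + 1 := by
  induction hn : (mgGraph src tgt).dist r v generalizing v with
  | zero =>
    rw [(hconn.dist_eq_zero_iff.mp hn).symm, bfsNodeID_root, List.length_singleton]
  | succ n ih =>
    have hv : v ≠ r := by rintro rfl; simp at hn
    obtain ⟨u, -, hdu, hu⟩ := exists_bfsNodeID_eq_append (L := L) (m := m) (hconn r v) hv
    rw [hu, List.length_append, ih u (by omega), List.length_singleton]

end BFS

theorem bfsNodeID_injective_general {V : Type*} [Fintype V] {Ed : Type*} [Fintype Ed]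
    (src tgt : Ed → V) (L : Ed → ℕ)
    (hL : Set.BijOn L Set.univ (Set.Icc 1 (Fintype.card Ed)))
    (r : V) (hconn : (mgGraph src tgt).Connected) :
    Function.Injective (bfsNodeID src tgt L (Fintype.card Ed) r) := by
  have hinj : Function.Injective L := Set.injOn_univ.mp hL.injOn
  intro v w hvw
  have hd : (mgGraph src tgt).dist r v = (mgGraph src tgt).dist r w := by
    simpa [length_bfsNodeID hconn] using congrArg List.length hvw
  induction hn : (mgGraph src tgt).dist r v generalizing v w with
  | zero =>
    exact (hconn.dist_eq_zero_iff.mp hn).symm.trans (hconn.dist_eq_zero_iff.mp (hd.symm.trans hn))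
  | succ n ih =>
    have hv : v ≠ r := by rintro rfl; simp at hn
    have hw : w ≠ r := by rintro rfl; simp [hn] at hd
    obtain ⟨u, huv, hu, hvu⟩ := exists_bfsNodeID_eq_append (hconn r v) hv
    obtain ⟨u', hu'w, hu', hwu'⟩ := exists_bfsNodeID_eq_append (hconn r w) hw
    rw [hvu, hwu'] at hvw
    obtain ⟨huu', hcode⟩ := List.append_inj hvw (by simp [length_bfsNodeID hconn, hu, hu', hd])
    obtain rfl : u = u' := ih huu' (by omega) (by omega)
    exact eq_of_mgCode_eq hinj hL.mapsTo huv hu'w (List.singleton_inj.mp hcode)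

/-- **Unique node IDs from a strict total edge ordering** (Lemma 1, combinatorial core):
on a connected directed multigraph with root `r` and an edge labeling `L` that is a
bijection onto `{1, …, m}` (encoding a strict total ordering of the edges), the BFS
node-ID assignment `h : V → List ℕ` is injective, i.e. every node receives a unique ID. -/
theorem bfsNodeID_injective {V : Type*} [Fintype V] {Ed : Type*} [Fintype Ed] [Nonempty Ed]
    (src tgt : Ed → V) (L : Ed → ℕ)
    (hL : Set.BijOn L Set.univ (Set.Icc 1 (Fintype.card Ed)))
    (r : V) (hconn : (mgGraph src tgt).Connected) :
    Function.Injective (bfsNodeID src tgt L (Fintype.card Ed) r) :=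
  bfsNodeID_injective_general src tgt L hL r hconn
end

section
/- Single-stage aggregation cannot compute the sum of per-sender maxima (expressivity separation, Section 3.1): there is no function F : Multiset ℝ → ℝ such that for all real numbers a, b, c, d, F {a, b, c, d} = max(a, b) + max(c, d). (Witness: the quadruples (0, 3, 1, 2) and (0, 1, 3, 2) have the same underlying multiset {0, 1, 2, 3} but max(0,3)+max(1,2) = 5 ≠ 4 = max(0,1)+max(3,2).) -/
/-- **Single-stage aggregation cannot compute the sum of per-sender maxima**
(expressivity separation, Section 3.1): there is no function `F : Multiset ℝ → ℝ` with
`F {a, b, c, d} = max a b + max c d` for all reals `a, b, c, d`. -/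
theorem no_single_stage_sum_of_max :
    ¬ ∃ F : Multiset ℝ → ℝ,
      ∀ a b c d : ℝ, F {a, b, c, d} = max a b + max c d := by
  rintro ⟨F, hF⟩
  have h1 := hF 0 3 1 2
  have h2 := hF 0 1 3 2
  have hm : ({0, 3, 1, 2} : Multiset ℝ) = {0, 1, 3, 2} := by
    simp only [Multiset.insert_eq_cons, Multiset.cons_swap]
  rw [hm, h2] at h1
  norm_num at h1
end

section
/- Single-stage aggregation cannot compute the maximum of per-sender sums (expressivity separation, Section 3.1): there is no function F : Multiset ℝ → ℝ such that for all real numbers a, b, c, d, F {a, b, c, d} = max(a + b, c + d). (Witness: the quadruples (0, 3, 1, 2) and (0, 1, 3, 2) have the same underlying multiset {0, 1, 2, 3} but max(0+3, 1+2) = 3 ≠ 5 = max(0+1, 3+2).) -/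
/-- **Single-stage aggregation cannot compute the maximum of per-sender sums**
(expressivity separation, Section 3.1): there is no function `F : Multiset ℝ → ℝ` with
`F {a, b, c, d} = max (a + b) (c + d)` for all reals `a, b, c, d`. -/
theorem no_single_stage_max_of_sum :
    ¬ ∃ F : Multiset ℝ → ℝ,
      ∀ a b c d : ℝ, F {a, b, c, d} = max (a + b) (c + d) := by
  rintro ⟨F, hF⟩
  have h1 := hF 0 3 1 2
  have h2 := hF 0 1 3 2
  have hms : ({0, 3, 1, 2} : Multiset ℝ) = {0, 1, 3, 2} := by simp [Multiset.cons_swap]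
  rw [hms] at h1
  rw [h1] at h2
  norm_num at h2
end

section
/- No function of the simultaneous single-stage SUM and MAX computes the two-stage sum of maxima (Section 3.1, paper's exact setting): there is no function F : ℝ × ℝ → ℝ such that for all real numbers a, b, c, d, F(a + b + c + d, max(max(a, b), max(c, d))) = max(a, b) + max(c, d). -/
/-- **No function of the simultaneous single-stage SUM and MAX computes the two-stage sum
of maxima** (Section 3.1, paper's exact setting): there is no `F : ℝ × ℝ → ℝ` such that
`F (a + b + c + d, max (max a b) (max c d)) = max a b + max c d` for all reals
`a, b, c, d`. -/
theorem no_function_of_sum_and_max :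
    ¬ ∃ F : ℝ × ℝ → ℝ,
      ∀ a b c d : ℝ,
        F (a + b + c + d, max (max a b) (max c d)) = max a b + max c d := by
  rintro ⟨F, hF⟩
  have h1 := hF 0 0 1 1
  have h2 := hF 0 1 0 1
  norm_num at h1 h2
  rw [h1] at h2
  norm_num at h2
end
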